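/- arXiv:2510.13361 — 3 statements merged into one kernel-verified Lean document; each statement's English description precedes it below -/
import Mathlib

section
/- For every test point z = (x, y), the loss gap of the global (parameter-averaged) predictors is controlled by the per-task mixed stability plus a curvature term: |ℓ(f(θ_g)(x), y) − ℓ(f(θ_g′)(x), y)| ≤ Σ_{a=1}^n γ_a ε_a + L·M·( Σ_{a=1}^n γ_a ‖θ_a − θ̄‖² + Σ_{a=1}^n γ_a ‖θ_a′ − θ̄‖² ). -/
/-!
Expand the model to second order around the previous iterate `θ̄`. Averaging is affine, so the
first-order parts of `f(Σ γ_a θ_a)` and `Σ γ_a f(θ_a)` coincide and the two differ only by Taylor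
remainders, each at most `M/2 · ‖· - θ̄‖²`; by Jensen, `‖Σ γ_a θ_a - θ̄‖² ≤ Σ γ_a ‖θ_a - θ̄‖²`.
Hence parameter averaging and prediction averaging differ by at most `M · Σ γ_a ‖θ_a - θ̄‖²`, and
the Lipschitz loss transfers this to the mixed-predictor stability bound on both sides.
-/

open Finset Set

section

variable {E : Type*} [NormedAddCommGroup E] [NormedSpace ℝ E]
  {F : Type*} [NormedAddCommGroup F] [NormedSpace ℝ F]

theorem Convex.norm_image_sub_le_of_norm_fderiv_le_mul_norm_sub {s : Set E} (hs : Convex ℝ s)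
    {h : E → F} (hh : ∀ z ∈ s, DifferentiableAt ℝ h z) {C : ℝ} {p y : E} (hp : p ∈ s)
    (hy : y ∈ s) (bound : ∀ z ∈ s, ‖fderiv ℝ h z‖ ≤ C * ‖z - p‖) :
    ‖h y - h p‖ ≤ C / 2 * ‖y - p‖ ^ 2 := by
  set v := y - p
  have hseg : ∀ t ∈ Icc (0 : ℝ) 1, p + t • v ∈ s := fun t ht => hs.add_smul_sub_mem hp hy ht
  have hderiv : ∀ t ∈ Icc (0 : ℝ) 1,
      HasDerivAt (fun t : ℝ => h (p + t • v) - h p) (fderiv ℝ h (p + t • v) v) t := by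
    intro t ht
    have hline : HasDerivAt (fun t : ℝ => p + t • v) v t := by
      simpa using ((hasDerivAt_id t).smul_const v).const_add p
    exact ((hh _ (hseg t ht)).hasFDerivAt.comp_hasDerivAt t hline).sub_const (h p)
  have hbound : ∀ t ∈ Ico (0 : ℝ) 1, ‖fderiv ℝ h (p + t • v) v‖ ≤ C * ‖v‖ ^ 2 * t := by
    intro t ht
    calc ‖fderiv ℝ h (p + t • v) v‖ ≤ ‖fderiv ℝ h (p + t • v)‖ * ‖v‖ :=
          ContinuousLinearMap.le_opNorm _ _
      _ ≤ C * ‖t • v‖ * ‖v‖ := by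
          gcongr
          simpa using bound _ (hseg t (mem_Icc_of_Ico ht))
      _ = C * ‖v‖ ^ 2 * t := by rw [norm_smul, Real.norm_of_nonneg ht.1]; ring
  have hboundary : ∀ t : ℝ,
      HasDerivAt (fun t => C * ‖v‖ ^ 2 * t ^ 2 / 2) (C * ‖v‖ ^ 2 * t) t := fun t =>
    (((hasDerivAt_pow 2 t).const_mul (C * ‖v‖ ^ 2)).div_const 2).congr_deriv (by ring)
  have key := image_norm_le_of_norm_deriv_right_le_deriv_boundary
    (fun t ht => (hderiv t ht).continuousAt.continuousWithinAt)
    (fun t ht => (hderiv t (mem_Icc_of_Ico ht)).hasDerivWithinAt) (by simp) hboundary hbound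
    (right_mem_Icc.2 zero_le_one)
  simp only [one_smul, one_pow, mul_one, v, add_sub_cancel] at key
  linarith

theorem Convex.norm_sub_sub_fderiv_le_of_norm_fderiv_fderiv_le {U : Set E} (hUopen : IsOpen U)
    (hUconv : Convex ℝ U) {g : E → F} (hg : ContDiffOn ℝ 2 g U) {M : ℝ}
    (hM : ∀ z ∈ U, ‖fderiv ℝ (fderiv ℝ g) z‖ ≤ M) {p y : E} (hp : p ∈ U) (hy : y ∈ U) :
    ‖g y - g p - fderiv ℝ g p (y - p)‖ ≤ M / 2 * ‖y - p‖ ^ 2 := by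
  set A := fderiv ℝ g p
  have hdiff : ∀ z ∈ U, DifferentiableAt ℝ g z := fun z hz =>
    (hg.differentiableOn (by norm_num) z hz).differentiableAt (hUopen.mem_nhds hz)
  have hdiff' : ∀ z ∈ U, DifferentiableAt ℝ (fderiv ℝ g) z := fun z hz =>
    ((hg.fderiv_of_isOpen hUopen (by norm_num)).differentiableOn one_ne_zero z hz).differentiableAt
      (hUopen.mem_nhds hz)
  have hfderiv : ∀ z ∈ U, fderiv ℝ (fun z => g z - A z) z = fderiv ℝ g z - A := fun z hz =>
    ((hdiff z hz).hasFDerivAt.sub A.hasFDerivAt).fderiv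
  have key := hUconv.norm_image_sub_le_of_norm_fderiv_le_mul_norm_sub (h := fun z => g z - A z)
    (fun z hz => (hdiff z hz).sub A.differentiableAt) hp hy fun z hz => by
      rw [hfderiv z hz]
      exact hUconv.norm_image_sub_le_of_norm_fderiv_le hdiff' hM hp hz
  convert key using 2
  rw [map_sub]
  abel

variable {ι : Type*} {s : Finset ι} {γ : ι → ℝ}

theorem norm_sum_smul_sub_sq_le (hγ : ∀ i ∈ s, 0 ≤ γ i) (hγ1 : ∑ i ∈ s, γ i = 1) (x : ι → E)
    (c : E) : ‖∑ i ∈ s, γ i • x i - c‖ ^ 2 ≤ ∑ i ∈ s, γ i * ‖x i - c‖ ^ 2 := by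
  have hcentre : ∑ i ∈ s, γ i • x i - c = ∑ i ∈ s, γ i • (x i - c) := by
    simp [smul_sub, sum_sub_distrib, ← sum_smul, hγ1]
  have htriangle : ‖∑ i ∈ s, γ i • x i - c‖ ≤ ∑ i ∈ s, γ i * ‖x i - c‖ := by
    rw [hcentre]
    refine (norm_sum_le _ _).trans_eq (sum_congr rfl fun i hi => ?_)
    rw [norm_smul, Real.norm_of_nonneg (hγ i hi)]
  have hjensen := (convexOn_pow 2).map_sum_le hγ hγ1 fun i _ => norm_nonneg (x i - c)
  simp only [smul_eq_mul] at hjensen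
  exact (pow_le_pow_left₀ (norm_nonneg _) htriangle 2).trans hjensen

theorem norm_apply_sum_smul_sub_sum_smul_apply_le {U : Set E} (hUopen : IsOpen U)
    (hUconv : Convex ℝ U) {g : E → F} (hg : ContDiffOn ℝ 2 g U) {M : ℝ}
    (hM : ∀ z ∈ U, ‖fderiv ℝ (fderiv ℝ g) z‖ ≤ M) (hγ : ∀ i ∈ s, 0 ≤ γ i)
    (hγ1 : ∑ i ∈ s, γ i = 1) {x : ι → E} (hx : ∀ i ∈ s, x i ∈ U)
    (hmean : ∑ i ∈ s, γ i • x i ∈ U) {c : E} (hc : c ∈ U) :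
    ‖g (∑ i ∈ s, γ i • x i) - ∑ i ∈ s, γ i • g (x i)‖ ≤ M * ∑ i ∈ s, γ i * ‖x i - c‖ ^ 2 := by
  set w := ∑ i ∈ s, γ i • x i
  set A := fderiv ℝ g c
  set R : E → F := fun z => g z - g c - A (z - c)
  have hM0 : 0 ≤ M := (norm_nonneg (fderiv ℝ (fderiv ℝ g) c)).trans (hM c hc)
  have hR : ∀ z ∈ U, ‖R z‖ ≤ M / 2 * ‖z - c‖ ^ 2 := fun z hz =>
    hUconv.norm_sub_sub_fderiv_le_of_norm_fderiv_fderiv_le hUopen hg hM hc hz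
  -- the affine part `g c + A (· - c)` commutes with taking weighted means
  have hsplit : g w - ∑ i ∈ s, γ i • g (x i) = R w - ∑ i ∈ s, γ i • R (x i) := by
    simp only [R, w, smul_sub, sum_sub_distrib, ← sum_smul, hγ1, one_smul, map_sub, map_sum,
      map_smul]
    abel
  have hRw : ‖R w‖ ≤ M / 2 * ∑ i ∈ s, γ i * ‖x i - c‖ ^ 2 :=
    (hR w hmean).trans (by gcongr; exact norm_sum_smul_sub_sq_le hγ hγ1 x c)
  have hRx : ‖∑ i ∈ s, γ i • R (x i)‖ ≤ M / 2 * ∑ i ∈ s, γ i * ‖x i - c‖ ^ 2 := by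
    refine (norm_sum_le _ _).trans ?_
    rw [mul_sum]
    refine sum_le_sum fun i hi => ?_
    rw [norm_smul, Real.norm_of_nonneg (hγ i hi), mul_left_comm]
    exact mul_le_mul_of_nonneg_left (hR _ (hx i hi)) (hγ i hi)
  rw [hsplit]
  linarith [norm_sub_le (R w) (∑ i ∈ s, γ i • R (x i))]

end

theorem global_stability_bound_general
    {E : Type*} [NormedAddCommGroup E] [NormedSpace ℝ E]
    {F : Type*} [NormedAddCommGroup F] [NormedSpace ℝ F]
    {X Y : Type*}
    (U : Set E) (hUopen : IsOpen U) (hUconv : Convex ℝ U)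
    -- the model: for each input x, θ ↦ f θ x is C² on U with second derivative ≤ M
    (f : E → X → F)
    (hf : ∀ x : X, ContDiffOn ℝ 2 (fun ϑ => f ϑ x) U)
    (M : ℝ)
    (hM : ∀ x : X, ∀ ϑ ∈ U, ‖fderiv ℝ (fderiv ℝ (fun ϑ' => f ϑ' x)) ϑ‖ ≤ M)
    -- the loss is L-Lipschitz in its first argument
    (ℓ : F → Y → ℝ) (L : ℝ) (hL : 0 ≤ L)
    (hLips : ∀ (y : Y) (u v : F), |ℓ u y - ℓ v y| ≤ L * ‖u - v‖)
    -- mixing weights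
    (n : ℕ) (γ : Fin n → ℝ) (hγ : ∀ a, 0 ≤ γ a) (hγsum : ∑ a, γ a = 1)
    -- base parameters trained on the two neighboring dataset collections,
    -- and the previous global iterate θ̄
    (θ θ' : Fin n → E) (hθ : ∀ a, θ a ∈ U) (hθ' : ∀ a, θ' a ∈ U)
    (θbar : E) (hθbar : θbar ∈ U)
    -- the aggregated global parameters lie in U
    (hθg : (∑ a, γ a • θ a) ∈ U) (hθg' : (∑ a, γ a • θ' a) ∈ U)
    -- per-task stability constants and the mixed-predictor stability condition
    (ε : Fin n → ℝ)
    (hstab : ∀ (x : X) (y : Y),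
      |ℓ (∑ a, γ a • f (θ a) x) y - ℓ (∑ a, γ a • f (θ' a) x) y| ≤ ∑ a, γ a * ε a) :
    ∀ (x : X) (y : Y),
      |ℓ (f (∑ a, γ a • θ a) x) y - ℓ (f (∑ a, γ a • θ' a) x) y| ≤
        (∑ a, γ a * ε a) +
          L * M * ((∑ a, γ a * ‖θ a - θbar‖ ^ 2) + ∑ a, γ a * ‖θ' a - θbar‖ ^ 2) := by
  intro x y
  have hgap : ∀ ϑ : Fin n → E, (∀ a, ϑ a ∈ U) → ∑ a, γ a • ϑ a ∈ U →
      |ℓ (f (∑ a, γ a • ϑ a) x) y - ℓ (∑ a, γ a • f (ϑ a) x) y| ≤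
        L * (M * ∑ a, γ a * ‖ϑ a - θbar‖ ^ 2) := fun ϑ hϑ hmean =>
    (hLips y _ _).trans <| mul_le_mul_of_nonneg_left
      (norm_apply_sum_smul_sub_sum_smul_apply_le hUopen hUconv (hf x) (hM x)
        (fun a _ => hγ a) hγsum (fun a _ => hϑ a) hmean hθbar) hL
  have hgap₁ := hgap θ hθ hθg
  have hgap₂ := hgap θ' hθ' hθg'
  have hmixed := hstab x y
  rw [abs_sub_comm] at hgap₂
  have htriangle := abs_sub_le (ℓ (f (∑ a, γ a • θ a) x) y) (ℓ (∑ a, γ a • f (θ a) x) y)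
    (ℓ (f (∑ a, γ a • θ' a) x) y)
  have htriangle' := abs_sub_le (ℓ (∑ a, γ a • f (θ a) x) y) (ℓ (∑ a, γ a • f (θ' a) x) y)
    (ℓ (f (∑ a, γ a • θ' a) x) y)
  linarith

/-- For every test point `z = (x, y)`, the loss gap of the global
(parameter-averaged) predictors trained on neighboring datasets is controlled by the
per-task mixed stability plus a curvature term:
`|ℓ(f θ_g x, y) - ℓ(f θ_g' x, y)| ≤ Σ_a γ_a ε_a
  + L·M·(Σ_a γ_a ‖θ_a - θ̄‖² + Σ_a γ_a ‖θ_a' - θ̄‖²)`. -/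
theorem global_stability_bound
    {E : Type*} [NormedAddCommGroup E] [NormedSpace ℝ E]
    {F : Type*} [NormedAddCommGroup F] [NormedSpace ℝ F]
    {X Y : Type*}
    (U : Set E) (hUopen : IsOpen U) (hUconv : Convex ℝ U)
    -- the model: for each input x, θ ↦ f θ x is C² on U with second derivative ≤ M
    (f : E → X → F)
    (hf : ∀ x : X, ContDiffOn ℝ 2 (fun ϑ => f ϑ x) U)
    (M : ℝ)
    (hM : ∀ x : X, ∀ ϑ ∈ U, ‖fderiv ℝ (fderiv ℝ (fun ϑ' => f ϑ' x)) ϑ‖ ≤ M)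
    -- the loss is L-Lipschitz in its first argument
    (ℓ : F → Y → ℝ) (L : ℝ) (hL : 0 ≤ L)
    (hLips : ∀ (y : Y) (u v : F), |ℓ u y - ℓ v y| ≤ L * ‖u - v‖)
    -- mixing weights
    (n : ℕ) (γ : Fin n → ℝ) (hγ : ∀ a, 0 ≤ γ a) (hγsum : ∑ a, γ a = 1)
    -- base parameters trained on the two neighboring dataset collections,
    -- and the previous global iterate θ̄
    (θ θ' : Fin n → E) (hθ : ∀ a, θ a ∈ U) (hθ' : ∀ a, θ' a ∈ U)
    (θbar : E) (hθbar : θbar ∈ U)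
    -- the aggregated global parameters lie in U
    (hθg : (∑ a, γ a • θ a) ∈ U) (hθg' : (∑ a, γ a • θ' a) ∈ U)
    -- per-task stability constants and the mixed-predictor stability condition
    (ε : Fin n → ℝ) (hε : ∀ a, 0 ≤ ε a)
    (hstab : ∀ (x : X) (y : Y),
      |ℓ (∑ a, γ a • f (θ a) x) y - ℓ (∑ a, γ a • f (θ' a) x) y| ≤ ∑ a, γ a * ε a) :
    ∀ (x : X) (y : Y),
      |ℓ (f (∑ a, γ a • θ a) x) y - ℓ (f (∑ a, γ a • θ' a) x) y| ≤
        (∑ a, γ a * ε a) +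
          L * M * ((∑ a, γ a * ‖θ a - θbar‖ ^ 2) + ∑ a, γ a * ‖θ' a - θbar‖ ^ 2) :=
  global_stability_bound_general U hUopen hUconv f hf M hM ℓ L hL hLips n γ hγ hγsum θ θ' hθ hθ'
    θbar hθbar hθg hθg' ε hstab
end

section
/- Let γ_1, …, γ_n ≥ 0 with Σ_a γ_a = 1, let θ̄, θ_1, …, θ_n ∈ U, and set θ_g = Σ_a γ_a θ_a. If f : E → F is twice continuously differentiable on the open convex set U with second derivative bounded in norm by M on U, then the first-order (linear) terms in the Taylor expansions around θ̄ cancel and ‖f(θ_g) − Σ_{a=1}^n γ_a f(θ_a)‖ ≤ (M/2)·( ‖θ_g − θ̄‖² + Σ_{a=1}^n γ_a ‖θ_a − θ̄‖² ). -/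
/-!
Expanding `f` to first order around `θbar`, the linear terms `f' θbar (θ_g - θbar)` and
`Σ_a γ_a f' θbar (θ_a - θbar)` coincide because the weights sum to one, so the gap
`f θ_g - Σ_a γ_a f θ_a` only sees the Taylor remainders. Each remainder is bounded by
`M/2 ‖y - θbar‖²`: along the segment from `θbar` to `y` the derivative moves by at most
`M t ‖y - θbar‖`, and integrating this linear bound produces the factor `1/2`.
-/

open Finset Set

section

variable {E F : Type*} [NormedAddCommGroup E] [NormedSpace ℝ E]
  [NormedAddCommGroup F] [NormedSpace ℝ F]

theorem norm_sub_le_of_norm_deriv_sub_le_mul {φ φ' : ℝ → F} {a b K : ℝ} (hab : a ≤ b)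
    (hφ : ∀ t ∈ Icc a b, HasDerivAt φ (φ' t) t) (bound : ∀ t ∈ Icc a b, ‖φ' t‖ ≤ K * (t - a)) :
    ‖φ b - φ a‖ ≤ K / 2 * (b - a) ^ 2 := by
  have hB : ∀ t, HasDerivAt (fun t => K / 2 * (t - a) ^ 2) (K * (t - a)) t := fun t =>
    ((((hasDerivAt_id' t).sub_const a).pow 2).const_mul (K / 2)).congr_deriv (by ring)
  refine image_norm_le_of_norm_deriv_right_le_deriv_boundary (f := fun t => φ t - φ a)
    (fun t ht => ((hφ t ht).continuousAt.sub continuousAt_const).continuousWithinAt)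
    (fun t ht => ((hφ t (Ico_subset_Icc_self ht)).sub_const (φ a)).hasDerivWithinAt)
    (by simp) hB (fun t ht => bound t (Ico_subset_Icc_self ht)) (right_mem_Icc.2 hab)

theorem Convex.norm_image_sub_sub_fderiv_le {s : Set E} (hs : Convex ℝ s) {f : E → F}
    (hf : ∀ y ∈ s, DifferentiableAt ℝ f y) {M : ℝ} {x y : E} (hx : x ∈ s) (hy : y ∈ s)
    (hf' : ∀ z ∈ s, ‖fderiv ℝ f z - fderiv ℝ f x‖ ≤ M * ‖z - x‖) :
    ‖f y - f x - fderiv ℝ f x (y - x)‖ ≤ M / 2 * ‖y - x‖ ^ 2 := by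
  set v := y - x
  have hseg : ∀ t ∈ Icc (0 : ℝ) 1, x + t • v ∈ s := fun t ht => hs.add_smul_sub_mem hx hy ht
  have hφ : ∀ t ∈ Icc (0 : ℝ) 1, HasDerivAt (fun t : ℝ => f (x + t • v) - t • fderiv ℝ f x v)
      (fderiv ℝ f (x + t • v) v - fderiv ℝ f x v) t := fun t ht => by
    have hline : HasDerivAt (fun t : ℝ => x + t • v) v t := by
      simpa using ((hasDerivAt_id t).smul_const v).const_add x
    exact ((hf _ (hseg t ht)).hasFDerivAt.comp_hasDerivAt t hline).sub
      (by simpa using (hasDerivAt_id t).smul_const (fderiv ℝ f x v))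
  have bound : ∀ t ∈ Icc (0 : ℝ) 1,
      ‖fderiv ℝ f (x + t • v) v - fderiv ℝ f x v‖ ≤ M * ‖v‖ ^ 2 * t := fun t ht =>
    calc ‖fderiv ℝ f (x + t • v) v - fderiv ℝ f x v‖
        ≤ ‖fderiv ℝ f (x + t • v) - fderiv ℝ f x‖ * ‖v‖ := by
          rw [← sub_apply]; exact ContinuousLinearMap.le_opNorm _ _
      _ ≤ M * ‖x + t • v - x‖ * ‖v‖ := by gcongr; exact hf' _ (hseg t ht)
      _ = M * ‖v‖ ^ 2 * t := by
          rw [add_sub_cancel_left, norm_smul, Real.norm_of_nonneg ht.1]; ring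
  convert norm_sub_le_of_norm_deriv_sub_le_mul zero_le_one hφ
      (fun t ht => by simpa using bound t ht) using 1
  · congr 1
    simp only [one_smul, zero_smul, add_zero, v, add_sub_cancel]
    abel
  · ring

theorem Convex.norm_image_sub_sub_fderiv_le_of_contDiffOn {U : Set E} (hUo : IsOpen U)
    (hUc : Convex ℝ U) {f : E → F} (hf : ContDiffOn ℝ 2 f U) {M : ℝ}
    (hM : ∀ z ∈ U, ‖fderiv ℝ (fderiv ℝ f) z‖ ≤ M) {x y : E} (hx : x ∈ U) (hy : y ∈ U) :
    ‖f y - f x - fderiv ℝ f x (y - x)‖ ≤ M / 2 * ‖y - x‖ ^ 2 := by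
  have hdiff : ∀ z ∈ U, DifferentiableAt ℝ f z := fun z hz =>
    (hf.contDiffAt (hUo.mem_nhds hz)).differentiableAt two_ne_zero
  have hdiff' : ∀ z ∈ U, DifferentiableAt ℝ (fderiv ℝ f) z := fun z hz =>
    ((hf.fderiv_of_isOpen hUo (m := 1) (by norm_num)).contDiffAt
      (hUo.mem_nhds hz)).differentiableAt one_ne_zero
  exact hUc.norm_image_sub_sub_fderiv_le hdiff hx hy fun z hz =>
    hUc.norm_image_sub_le_of_norm_fderiv_le hdiff' hM hx hz

theorem apply_sum_smul_sub_sum_smul_apply_eq {ι : Type*} (s : Finset ι) {γ : ι → ℝ}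
    (hγ : ∑ i ∈ s, γ i = 1) (f : E → F) (L : E →L[ℝ] F) (x₀ : E) (θ : ι → E) :
    f (∑ i ∈ s, γ i • θ i) - ∑ i ∈ s, γ i • f (θ i) =
      (f (∑ i ∈ s, γ i • θ i) - f x₀ - L (∑ i ∈ s, γ i • θ i - x₀)) -
        ∑ i ∈ s, γ i • (f (θ i) - f x₀ - L (θ i - x₀)) := by
  simp only [smul_sub, sum_sub_distrib, ← sum_smul, hγ, one_smul, map_sub, map_sum, map_smul]
  abel

end

/-- For nonnegative weights `γ` summing to 1, base parameters
`θ a ∈ U` and a reference point `θ̄ ∈ U`, with `θ_g = Σ_a γ_a • θ_a`, if `f` is twice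
continuously differentiable on the open convex set `U` with second derivative bounded in
norm by `M` on `U`, then the first-order (linear) Taylor terms around `θ̄` cancel and
`‖f θ_g - Σ_a γ_a • f (θ a)‖ ≤ (M/2)·(‖θ_g - θ̄‖² + Σ_a γ_a ‖θ a - θ̄‖²)`. -/
theorem mixing_gap_second_order_bound
    {E : Type*} [NormedAddCommGroup E] [NormedSpace ℝ E]
    {F : Type*} [NormedAddCommGroup F] [NormedSpace ℝ F]
    (U : Set E) (hUopen : IsOpen U) (hUconv : Convex ℝ U)
    (f : E → F) (hf : ContDiffOn ℝ 2 f U)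
    (M : ℝ) (hM : ∀ x ∈ U, ‖fderiv ℝ (fderiv ℝ f) x‖ ≤ M)
    (n : ℕ) (γ : Fin n → ℝ) (hγ : ∀ a, 0 ≤ γ a) (hγsum : ∑ a, γ a = 1)
    (θbar : E) (hθbar : θbar ∈ U)
    (θ : Fin n → E) (hθ : ∀ a, θ a ∈ U) :
    ‖f (∑ a, γ a • θ a) - ∑ a, γ a • f (θ a)‖ ≤
      (M / 2) * (‖(∑ a, γ a • θ a) - θbar‖ ^ 2 + ∑ a, γ a * ‖θ a - θbar‖ ^ 2) := by
  have hθg : ∑ a, γ a • θ a ∈ U := hUconv.sum_mem (fun a _ => hγ a) hγsum fun a _ => hθ a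
  have taylor {y : E} (hy : y ∈ U) :=
    hUconv.norm_image_sub_sub_fderiv_le_of_contDiffOn hUopen hf hM hθbar hy
  rw [apply_sum_smul_sub_sum_smul_apply_eq _ hγsum f (fderiv ℝ f θbar) θbar]
  refine (norm_sub_le _ _).trans ((add_le_add_right (norm_sum_le _ _) _).trans ?_)
  simp only [norm_smul, Real.norm_of_nonneg (hγ _), mul_add, mul_sum, mul_left_comm (M / 2)]
  gcongr with a
  · exact taylor hθg
  · exact hγ a
  · exact taylor (hθ a)
end

section
/- Let γ_1, …, γ_n ≥ 0 with Σ_a γ_a = 1, let θ̄, θ_1, …, θ_n ∈ U, and set θ_g = Σ_a γ_a θ_a. If f : E → F is twice continuously differentiable on the open convex set U with second derivative bounded in norm by M on U, then ‖f(θ_g) − Σ_{a=1}^n γ_a f(θ_a)‖ ≤ M · Σ_{a=1}^n γ_a ‖θ_a − θ̄‖². -/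
/-!
Expand `f` to first order around `θbar`, with linear part `D = f'(θbar)`. Because the weights sum
to one, the affine part `f θbar + D (· - θbar)` passes through the mixture unchanged, so the gap
equals `R θ_g - Σ_a γ_a R θ_a` for the Taylor remainder `R`. Since `f'` is `M`-Lipschitz on `U`,
`‖R z‖ ≤ M / 2 * ‖z - θbar‖ ^ 2` there, and convexity of `‖· - θbar‖ ^ 2` bounds the first term by
`M / 2 * Σ_a γ_a ‖θ_a - θbar‖ ^ 2`, the same as the second.
-/

open Finset Set

section TaylorRemainder

variable {E F : Type*} [NormedAddCommGroup E] [NormedSpace ℝ E]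
  [NormedAddCommGroup F] [NormedSpace ℝ F] {s : Set E} {f : E → F} {f' : E → E →L[ℝ] F} {M : ℝ}

theorem Convex.norm_image_sub_sub_fderiv_le_of_lipschitz (hs : Convex ℝ s)
    (hf : ∀ z ∈ s, HasFDerivAt f (f' z) z)
    (hf' : ∀ a ∈ s, ∀ b ∈ s, ‖f' a - f' b‖ ≤ M * ‖a - b‖) {x y : E} (hx : x ∈ s) (hy : y ∈ s) :
    ‖f y - f x - f' x (y - x)‖ ≤ M / 2 * ‖y - x‖ ^ 2 := by
  set v := y - x
  have hseg : ∀ t ∈ Icc (0 : ℝ) 1, x + t • v ∈ s := fun t ht => hs.add_smul_sub_mem hx hy ht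
  set g : ℝ → F := fun t => f (x + t • v) - f x - t • f' x v
  have hg : ∀ t ∈ Icc (0 : ℝ) 1, HasDerivAt g (f' (x + t • v) v - f' x v) t := by
    intro t ht
    have hline : HasDerivAt (fun t : ℝ => x + t • v) v t := by
      simpa using ((hasDerivAt_id t).smul_const v).const_add x
    have hlin : HasDerivAt (fun t : ℝ => t • f' x v) (f' x v) t := by
      simpa using (hasDerivAt_id t).smul_const (f' x v)
    exact (((hf _ (hseg t ht)).comp_hasDerivAt t hline).sub_const (f x)).sub hlin
  have hB : ∀ t : ℝ, HasDerivAt (fun t => M * ‖v‖ ^ 2 / 2 * t ^ 2) (M * ‖v‖ ^ 2 * t) t :=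
    fun t => ((hasDerivAt_pow 2 t).const_mul (M * ‖v‖ ^ 2 / 2)).congr_deriv (by push_cast; ring)
  have hbound : ∀ t ∈ Ico (0 : ℝ) 1, ‖f' (x + t • v) v - f' x v‖ ≤ M * ‖v‖ ^ 2 * t := by
    intro t ht
    calc ‖f' (x + t • v) v - f' x v‖ = ‖(f' (x + t • v) - f' x) v‖ := rfl
      _ ≤ ‖f' (x + t • v) - f' x‖ * ‖v‖ := (f' (x + t • v) - f' x).le_opNorm v
      _ ≤ M * ‖x + t • v - x‖ * ‖v‖ := by
        gcongr
        exact hf' _ (hseg t (Ico_subset_Icc_self ht)) _ hx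
      _ = M * ‖v‖ ^ 2 * t := by
        rw [add_sub_cancel_left, norm_smul, Real.norm_of_nonneg ht.1]
        ring
  have hg1 := image_norm_le_of_norm_deriv_right_le_deriv_boundary
    (fun t ht => (hg t ht).continuousAt.continuousWithinAt)
    (fun t ht => (hg t (Ico_subset_Icc_self ht)).hasDerivWithinAt)
    (by simp [g]) hB hbound (right_mem_Icc.2 zero_le_one)
  simpa [g, v, mul_div_right_comm, mul_comm] using hg1

theorem Convex.norm_image_sub_sub_fderiv_le_of_norm_fderiv_fderiv_le (hU : IsOpen s)
    (hs : Convex ℝ s) (hf : ContDiffOn ℝ 2 f s) (hM : ∀ z ∈ s, ‖fderiv ℝ (fderiv ℝ f) z‖ ≤ M)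
    {x y : E} (hx : x ∈ s) (hy : y ∈ s) :
    ‖f y - f x - fderiv ℝ f x (y - x)‖ ≤ M / 2 * ‖y - x‖ ^ 2 := by
  have hf₂ : ∀ z ∈ s, ContDiffAt ℝ 2 f z := fun z hz => hf.contDiffAt (hU.mem_nhds hz)
  refine hs.norm_image_sub_sub_fderiv_le_of_lipschitz
    (fun z hz => ((hf₂ z hz).differentiableAt two_ne_zero).hasFDerivAt)
    (fun a ha b hb => hs.norm_image_sub_le_of_norm_fderiv_le ?_ hM hb ha) hx hy
  exact fun z hz => ((hf₂ z hz).fderiv_right (m := 1) le_rfl).differentiableAt one_ne_zero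

end TaylorRemainder

theorem sub_sum_smul_eq_of_sum_eq_one {ι R E F : Type*} [Ring R] [AddCommGroup E] [Module R E]
    [AddCommGroup F] [Module R F] (f : E → F) (L : E →ₗ[R] F) (c : E) {t : Finset ι}
    {w : ι → R} (hw : ∑ i ∈ t, w i = 1) (p : ι → E) :
    f (∑ i ∈ t, w i • p i) - ∑ i ∈ t, w i • f (p i) =
      (f (∑ i ∈ t, w i • p i) - f c - L (∑ i ∈ t, w i • p i - c)) -
        ∑ i ∈ t, w i • (f (p i) - f c - L (p i - c)) := by
  simp only [smul_sub, sum_sub_distrib, ← sum_smul, hw, one_smul, ← map_smul, ← map_sum]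
  abel

theorem norm_sum_smul_sub_sq_le_s9 {ι E : Type*} [NormedAddCommGroup E] [NormedSpace ℝ E]
    {t : Finset ι} {w : ι → ℝ} (hw₀ : ∀ i ∈ t, 0 ≤ w i) (hw : ∑ i ∈ t, w i = 1)
    (p : ι → E) (c : E) :
    ‖∑ i ∈ t, w i • p i - c‖ ^ 2 ≤ ∑ i ∈ t, w i * ‖p i - c‖ ^ 2 := by
  have hconv : ConvexOn ℝ univ (fun z : E => ‖z‖ ^ 2) :=
    convexOn_univ_norm.pow (fun _ _ => norm_nonneg _) 2
  have hcenter : ∑ i ∈ t, w i • p i - c = ∑ i ∈ t, w i • (p i - c) := by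
    simp only [smul_sub, sum_sub_distrib, ← sum_smul, hw, one_smul]
  rw [hcenter]
  exact hconv.map_sum_le hw₀ hw (fun _ _ => mem_univ _)

/-- For nonnegative weights `γ` summing to 1, base parameters
`θ a ∈ U` and a reference point `θ̄ ∈ U`, with `θ_g = Σ_a γ_a • θ_a`, if `f` is twice
continuously differentiable on the open convex set `U` with second derivative bounded in
norm by `M` on `U`, then `‖f θ_g - Σ_a γ_a • f (θ a)‖ ≤ M · Σ_a γ_a ‖θ a - θ̄‖²`. -/
theorem mixing_gap_compact_bound
    {E : Type*} [NormedAddCommGroup E] [NormedSpace ℝ E]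
    {F : Type*} [NormedAddCommGroup F] [NormedSpace ℝ F]
    (U : Set E) (hUopen : IsOpen U) (hUconv : Convex ℝ U)
    (f : E → F) (hf : ContDiffOn ℝ 2 f U)
    (M : ℝ) (hM : ∀ x ∈ U, ‖fderiv ℝ (fderiv ℝ f) x‖ ≤ M)
    (n : ℕ) (γ : Fin n → ℝ) (hγ : ∀ a, 0 ≤ γ a) (hγsum : ∑ a, γ a = 1)
    (θbar : E) (hθbar : θbar ∈ U)
    (θ : Fin n → E) (hθ : ∀ a, θ a ∈ U) :
    ‖f (∑ a, γ a • θ a) - ∑ a, γ a • f (θ a)‖ ≤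
      M * ∑ a, γ a * ‖θ a - θbar‖ ^ 2 := by
  have hM₀ : 0 ≤ M := (norm_nonneg (fderiv ℝ (fderiv ℝ f) θbar)).trans (hM θbar hθbar)
  have hθg : ∑ a, γ a • θ a ∈ U := hUconv.sum_mem (fun a _ => hγ a) hγsum (fun a _ => hθ a)
  have hR := fun z (hz : z ∈ U) =>
    hUconv.norm_image_sub_sub_fderiv_le_of_norm_fderiv_fderiv_le hUopen hf hM hθbar hz
  have hjensen := norm_sum_smul_sub_sq_le_s9 (fun a _ => hγ a) hγsum θ θbar
  rw [sub_sum_smul_eq_of_sum_eq_one f (fderiv ℝ f θbar : E →ₗ[ℝ] F) θbar hγsum]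
  calc _ ≤ M / 2 * ‖∑ a, γ a • θ a - θbar‖ ^ 2 + ∑ a, γ a * (M / 2 * ‖θ a - θbar‖ ^ 2) := by
        refine (norm_sub_le _ _).trans (add_le_add (hR _ hθg) ?_)
        refine (norm_sum_le _ _).trans (sum_le_sum fun a _ => ?_)
        rw [norm_smul, Real.norm_of_nonneg (hγ a)]
        exact mul_le_mul_of_nonneg_left (hR _ (hθ a)) (hγ a)
    _ ≤ M / 2 * ∑ a, γ a * ‖θ a - θbar‖ ^ 2 + ∑ a, γ a * (M / 2 * ‖θ a - θbar‖ ^ 2) := by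
        gcongr
    _ = M * ∑ a, γ a * ‖θ a - θbar‖ ^ 2 := by
        simp only [mul_sum, ← sum_add_distrib]
        exact sum_congr rfl fun a _ => by ring
end
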